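/- arXiv:2409.11385 — 7 statements merged into one kernel-verified Lean document; each statement's English description precedes it below -/
import Mathlib

section
/- Let F* be a cumulative distribution function on (0,∞) with F*(0)=0 and lim_{t→∞} F*(t)=1, and let T* be a random variable with distribution F*. For 0 ≤ l < u with F*(u) > F*(l), the conditional expectation E[F*(T*) + F*(T*−) − 1 | T* ∈ (l,u]] equals F*(l) + F*(u) − 1. -/
open MeasureTheory Filter Set Function

private lemma psr_key (F : StieltjesFunction ℝ) {l u : ℝ} (hlu : l < u) :
    ∫⁻ t in Set.Ioc l u,
      (ENNReal.ofReal (F t - F l) + ENNReal.ofReal (leftLim F t - F l)) ∂F.measure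
      = (ENNReal.ofReal (F u - F l)) ^ 2 := by
  set μ := F.measure
  set ν := μ.restrict (Set.Ioc l u) with hνdef
  have hν_univ : ν Set.univ = ENNReal.ofReal (F u - F l) := by
    rw [hνdef, Measure.restrict_apply_univ, F.measure_Ioc]
  have hfin : IsFiniteMeasure ν :=
    ⟨by rw [hν_univ]; exact ENNReal.ofReal_lt_top⟩
  -- pointwise identification on the set
  have hcong : ∀ t ∈ Set.Ioc l u,
      ENNReal.ofReal (F t - F l) + ENNReal.ofReal (leftLim F t - F l)
        = ν (Set.Iic t) + ν (Set.Iio t) := by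
    intro t ht
    have h1 : ν (Set.Iic t) = ENNReal.ofReal (F t - F l) := by
      rw [hνdef, Measure.restrict_apply measurableSet_Iic]
      have : Set.Iic t ∩ Set.Ioc l u = Set.Ioc l t := by
        ext x
        simp only [Set.mem_inter_iff, Set.mem_Iic, Set.mem_Ioc]
        exact ⟨fun ⟨h1, h2, h3⟩ => ⟨h2, h1⟩, fun ⟨h1, h2⟩ => ⟨h2, h1, h2.trans ht.2⟩⟩
      rw [this, F.measure_Ioc]
    have h2 : ν (Set.Iio t) = ENNReal.ofReal (leftLim F t - F l) := by
      rw [hνdef, Measure.restrict_apply measurableSet_Iio]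
      have : Set.Iio t ∩ Set.Ioc l u = Set.Ioo l t := by
        ext x
        simp only [Set.mem_inter_iff, Set.mem_Iio, Set.mem_Ioc, Set.mem_Ioo]
        exact ⟨fun ⟨h1, h2, h3⟩ => ⟨h2, h1⟩, fun ⟨h1, h2⟩ => ⟨h2, h1, h2.le.trans ht.2⟩⟩
      rw [this, F.measure_Ioo]
    rw [h1, h2]
  rw [setLIntegral_congr_fun measurableSet_Ioc hcong]
  have m1 : Measurable fun t : ℝ => ν (Set.Iic t) :=
    Monotone.measurable (fun a b hab => measure_mono (Set.Iic_subset_Iic.mpr hab))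
  have m2 : Measurable fun t : ℝ => ν (Set.Iio t) :=
    Monotone.measurable (fun a b hab => measure_mono (Set.Iio_subset_Iio hab))
  have hI : ∫⁻ t in Set.Ioc l u,
      (ν (Set.Iic t) + ν (Set.Iio t)) ∂μ = ∫⁻ t, (ν (Set.Iic t) + ν (Set.Iio t)) ∂ν := rfl
  rw [hI, lintegral_add_left m1]
  have hle : ∫⁻ t, ν (Set.Iic t) ∂ν = (ν.prod ν) {p : ℝ × ℝ | p.2 ≤ p.1} := by
    rw [Measure.prod_apply (measurableSet_le measurable_snd measurable_fst)]
    congr 1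
  have hlt : ∫⁻ t, ν (Set.Iio t) ∂ν = (ν.prod ν) {p : ℝ × ℝ | p.2 < p.1} := by
    rw [Measure.prod_apply (measurableSet_lt measurable_snd measurable_fst)]
    congr 1
  have hswap : (ν.prod ν) {p : ℝ × ℝ | p.2 < p.1} = (ν.prod ν) {p : ℝ × ℝ | p.1 < p.2} := by
    conv_rhs => rw [← Measure.prod_swap]
    rw [Measure.map_apply measurable_swap (measurableSet_lt measurable_fst measurable_snd)]
    rfl
  have hsplit : (ν.prod ν) {p : ℝ × ℝ | p.2 ≤ p.1} + (ν.prod ν) {p : ℝ × ℝ | p.1 < p.2}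
      = (ν.prod ν) Set.univ := by
    have hdisj : Disjoint {p : ℝ × ℝ | p.2 ≤ p.1} {p : ℝ × ℝ | p.1 < p.2} :=
      Set.disjoint_left.mpr fun p (hp : p.2 ≤ p.1) (hp' : p.1 < p.2) => absurd hp' (not_lt.mpr hp)
    have h := measure_union (μ := ν.prod ν) hdisj (measurableSet_lt measurable_fst measurable_snd)
    have hunion : ({p : ℝ × ℝ | p.2 ≤ p.1} ∪ {p : ℝ × ℝ | p.1 < p.2}) = Set.univ := by
      ext p; simp [le_or_gt]
    rw [hunion] at h
    exact h.symm
  have huniv : (ν.prod ν) Set.univ = (ENNReal.ofReal (F u - F l)) ^ 2 := by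
    rw [← Set.univ_prod_univ, Measure.prod_prod, hν_univ, sq]
  rw [hle, hlt, hswap, hsplit, huniv]

/-- The conditional expectation of the PSR `F*(T*) + F*(T*−) − 1` given `T* ∈ (l,u]`
equals `F*(l) + F*(u) − 1`. -/
theorem psr_interval_conditional_expectation
    (F : StieltjesFunction ℝ) (hF0 : F 0 = 0)
    (hFtop : Tendsto F atTop (nhds 1))
    (l u : ℝ) (hl : 0 ≤ l) (hlu : l < u) (hFlu : F l < F u) :
    (∫ t in Set.Ioc l u, (F t + Function.leftLim F t - 1) ∂F.measure) / (F u - F l)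
      = F l + F u - 1 := by
  set μ := F.measure
  set d := F u - F l with hd
  have hd0 : 0 < d := sub_pos.mpr hFlu
  have hmeasF : Measurable (F : ℝ → ℝ) := F.mono.measurable
  have hmeasL : Measurable (leftLim (F : ℝ → ℝ)) := F.mono.leftLim.measurable
  set g : ℝ → ℝ := fun t => (F t - F l) + (leftLim F t - F l) with hg
  have hgmeas : Measurable g := ((hmeasF.sub measurable_const).add (hmeasL.sub measurable_const))
  have hgnonneg : ∀ t ∈ Set.Ioc l u, 0 ≤ g t := by
    intro t ht
    have h1 : F l ≤ F t := F.mono ht.1.le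
    have h2 : F l ≤ leftLim F t := F.mono.le_leftLim ht.1
    simp only [hg]
    linarith
  have hgnonneg' : 0 ≤ᵐ[μ.restrict (Set.Ioc l u)] g :=
    (ae_restrict_iff' measurableSet_Ioc).2 (Filter.Eventually.of_forall hgnonneg)
  have hofReal : ∀ t ∈ Set.Ioc l u,
      ENNReal.ofReal (g t) = ENNReal.ofReal (F t - F l) + ENNReal.ofReal (leftLim F t - F l) := by
    intro t ht
    have h1 : F l ≤ F t := F.mono ht.1.le
    have h2 : F l ≤ leftLim F t := F.mono.le_leftLim ht.1
    rw [hg]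
    exact ENNReal.ofReal_add (by linarith) (by linarith)
  have hlg : ∫⁻ t in Set.Ioc l u, ENNReal.ofReal (g t) ∂μ = (ENNReal.ofReal d) ^ 2 := by
    rw [setLIntegral_congr_fun measurableSet_Ioc hofReal]
    exact psr_key F hlu
  have hginteg : IntegrableOn g (Set.Ioc l u) μ := by
    refine ⟨hgmeas.aestronglyMeasurable, ?_⟩
    rw [hasFiniteIntegral_iff_ofReal hgnonneg']
    rw [hlg]
    exact ENNReal.pow_lt_top ENNReal.ofReal_lt_top
  have hint_g : ∫ t in Set.Ioc l u, g t ∂μ = d ^ 2 := by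
    rw [integral_eq_lintegral_of_nonneg_ae hgnonneg' hgmeas.aestronglyMeasurable, hlg]
    rw [← ENNReal.ofReal_pow hd0.le, ENNReal.toReal_ofReal (by positivity)]
  have hμIoc : μ (Set.Ioc l u) = ENNReal.ofReal d := F.measure_Ioc l u
  have hconst : ∫ _t in Set.Ioc l u, (2 * F l - 1) ∂μ = d * (2 * F l - 1) := by
    rw [setIntegral_const, measureReal_def, hμIoc, smul_eq_mul, ENNReal.toReal_ofReal hd0.le]
  have hsplit : ∫ t in Set.Ioc l u, (F t + leftLim F t - 1) ∂μ
      = (∫ t in Set.Ioc l u, g t ∂μ) + ∫ _t in Set.Ioc l u, (2 * F l - 1) ∂μ := by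
    rw [← integral_add hginteg (integrableOn_const (by rw [hμIoc]; exact ENNReal.ofReal_ne_top))]
    apply setIntegral_congr_fun measurableSet_Ioc
    intro t _
    simp only [hg]
    ring
  rw [hsplit, hint_g, hconst]
  field_simp
  ring
end

section
/- Let F be a CDF on (0,∞) with F(0)=0 and F(∞)=1, and let 0 = c₀ < c₁ < ⋯ < c_k < c_{k+1} = ∞ with f_j := F(c_j). Then the second moment of the interval-censored PSR satisfies Σ_{j=0}^{k} (f_{j+1} − f_j)(f_j + f_{j+1} − 1)² = Σ_{j=1}^{k} f_{j+1} f_j (f_{j+1} − f_j). -/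
open Finset

/-- The second moment of the interval-censored PSR:
`Σ_{j=0}^{k} (f_{j+1} − f_j)(f_j + f_{j+1} − 1)² = Σ_{j=1}^{k} f_{j+1} f_j (f_{j+1} − f_j)`
when `f₀ = 0` and `f_{k+1} = 1`. -/
theorem psr_interval_second_moment (k : ℕ) (c : ℕ → ℝ) (F : ℝ → ℝ) (hmono : Monotone F)
    (hc : ∀ j ≤ k, c j < c (j + 1)) (hc0 : c 0 = 0)
    (f : ℕ → ℝ) (hf : ∀ j ≤ k + 1, f j = F (c j)) (hf0 : f 0 = 0) (hftop : f (k + 1) = 1) :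
    ∑ j ∈ range (k + 1), (f (j + 1) - f j) * (f j + f (j + 1) - 1) ^ 2
      = ∑ j ∈ Icc 1 k, f (j + 1) * f j * (f (j + 1) - f j) := by
  have tele : ∑ j ∈ range (k + 1),
      (((f (j+1))^3 - 2*(f (j+1))^2 + f (j+1)) - ((f j)^3 - 2*(f j)^2 + f j)) = 0 := by
    rw [Finset.sum_range_sub (fun j => (f j)^3 - 2*(f j)^2 + f j)]
    simp [hf0, hftop]; norm_num
  have hIcc : ∑ j ∈ Icc 1 k, f (j + 1) * f j * (f (j + 1) - f j)
      = ∑ j ∈ range (k + 1), f (j + 1) * f j * (f (j + 1) - f j) := by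
    rw [Finset.sum_range_succ' (fun j => f (j + 1) * f j * (f (j + 1) - f j)) k]
    simp only [hf0, mul_zero, zero_mul, add_zero]
    rw [← Finset.Ico_add_one_right_eq_Icc, Finset.sum_Ico_eq_sum_range]
    simp [add_comm 1]
  rw [hIcc, ← sub_eq_zero, ← Finset.sum_sub_distrib, ← tele]
  exact Finset.sum_congr rfl fun j _ => by ring
end

section
/- Let T ~ Exponential(λ) and τ > 0, let K = ⌊T/τ⌋, and define R = 1 − e^{−λτK}(1 + e^{−λτ}) (the PSR of the interval containing T). Then for x ∈ (−1,1), Pr(R ≤ x) = 1 − q^{⌊log_q((1−x)/(1+q))⌋ + 1}, where q = e^{−λτ}. -/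
open MeasureTheory Filter Topology


lemma measure_lt_of_cdf' {Ω : Type*} [MeasurableSpace Ω] (μ : Measure Ω)
    (T : Ω → ℝ) (lam : ℝ) (hTpos : ∀ ω, 0 < T ω)
    (hcdf : ∀ t : ℝ, 0 ≤ t →
      μ {ω | T ω ≤ t} = ENNReal.ofReal (1 - Real.exp (-lam * t)))
    (c : ℝ) (hc : 0 ≤ c) :
    μ {ω | T ω < c} = ENNReal.ofReal (1 - Real.exp (-lam * c)) := by
  rcases eq_or_lt_of_le hc with h0 | h0
  · have : {ω | T ω < c} = (∅ : Set Ω) := by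
      ext ω; simp only [Set.mem_setOf_eq, Set.mem_empty_iff_false, iff_false, not_lt]
      rw [← h0]; exact (hTpos ω).le
    rw [this, measure_empty, ← h0]
    simp
  · set t : ℕ → ℝ := fun n => c - c / (n + 1) with ht_def
    have htn : ∀ n : ℕ, 0 ≤ t n := by
      intro n
      have : c / (n + 1) ≤ c := by
        apply div_le_self hc
        have : (0:ℝ) ≤ n := Nat.cast_nonneg n
        linarith
      simpa [ht_def] using by linarith
    have hmono : Monotone fun n : ℕ => {ω | T ω ≤ t n} := by
      intro a b hab ω hω
      simp only [Set.mem_setOf_eq] at *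
      have h1 : c / (b + 1) ≤ c / (a + 1) := by
        apply div_le_div_of_nonneg_left hc
        · positivity
        · have := (Nat.cast_le (α := ℝ)).2 hab; linarith
      have hab' : t a ≤ t b := by show c - c/(a+1) ≤ c - c/(b+1); linarith
      linarith
    have hunion : (⋃ n, {ω | T ω ≤ t n}) = {ω | T ω < c} := by
      ext ω
      simp only [Set.mem_iUnion, Set.mem_setOf_eq]
      constructor
      · rintro ⟨n, hn⟩
        have : 0 < c / (n + 1) := by positivity
        have hn' : t n = c - c / (n+1) := rfl
        linarith [hn, hn' ▸ hn]
      · intro hω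
        obtain ⟨n, hn⟩ := exists_nat_gt (c / (c - T ω))
        refine ⟨n, ?_⟩
        have hd : 0 < c - T ω := by linarith
        have h1 : c / ((n:ℝ) + 1) ≤ c - T ω := by
          rw [div_le_iff₀ (by positivity)]
          have h2 : c / (c - T ω) ≤ n + 1 := by linarith
          calc c = (c / (c - T ω)) * (c - T ω) := by field_simp
          _ ≤ ((n:ℝ)+1) * (c - T ω) := by nlinarith
          _ = (c - T ω) * ((n:ℝ)+1) := by ring
        simp only [ht_def]; linarith
    have hlim := tendsto_measure_iUnion_atTop (μ := μ) hmono
    rw [hunion] at hlim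
    have htt : Tendsto t atTop (𝓝 c) := by
      have h1 : Tendsto (fun n : ℕ => c / ((n:ℝ) + 1)) atTop (𝓝 0) :=
        Tendsto.div_atTop tendsto_const_nhds
          (tendsto_atTop_add_const_right _ 1 tendsto_natCast_atTop_atTop)
      have := tendsto_const_nhds (x := c) (f := atTop (α := ℕ)) |>.sub h1
      simpa [ht_def] using this
    have hlim2 : Tendsto (fun n => μ {ω | T ω ≤ t n}) atTop
        (𝓝 (ENNReal.ofReal (1 - Real.exp (-lam * c)))) := by
      have h1 : Tendsto (fun n => 1 - Real.exp (-lam * t n)) atTop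
          (𝓝 (1 - Real.exp (-lam * c))) :=
        tendsto_const_nhds.sub ((Real.continuous_exp.tendsto _).comp (htt.const_mul _))
      have h2 := (ENNReal.continuous_ofReal.tendsto _).comp h1
      refine h2.congr fun n => ?_
      exact (hcdf (t n) (htn n)).symm
    exact tendsto_nhds_unique hlim hlim2


/-- For `T ~ Exponential(λ)`, `K = ⌊T/τ⌋` and `R = 1 − q^K (1+q)` with `q = e^{−λτ}`
(the PSR of the interval containing `T`), for `x ∈ (−1,1)` we have
`Pr(R ≤ x) = 1 − q^{⌊log_q((1−x)/(1+q))⌋ + 1}`. -/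
theorem psr_exponential_sampling_distribution {Ω : Type*} [MeasurableSpace Ω]
    (μ : Measure Ω) [IsProbabilityMeasure μ] (T : Ω → ℝ) (hT : Measurable T)
    (lam τ : ℝ) (hlam : 0 < lam) (hτ : 0 < τ) (hTpos : ∀ ω, 0 < T ω)
    (hcdf : ∀ t : ℝ, 0 ≤ t →
      μ {ω | T ω ≤ t} = ENNReal.ofReal (1 - Real.exp (-lam * t)))
    (x : ℝ) (hx : x ∈ Set.Ioo (-1 : ℝ) 1) :
    μ {ω | 1 - Real.exp (-lam * τ) ^ ⌊T ω / τ⌋ * (1 + Real.exp (-lam * τ)) ≤ x}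
      = ENNReal.ofReal (1 - Real.exp (-lam * τ) ^
          (⌊Real.logb (Real.exp (-lam * τ)) ((1 - x) / (1 + Real.exp (-lam * τ)))⌋ + 1)) := by
  obtain ⟨hx1, hx2⟩ := hx
  set q : ℝ := Real.exp (-lam * τ) with hq_def
  have hq0 : 0 < q := Real.exp_pos _
  have hq1 : q < 1 := by
    rw [hq_def, Real.exp_lt_one_iff]; nlinarith
  have hlogq : Real.log q < 0 := Real.log_neg hq0 hq1
  set y : ℝ := (1 - x) / (1 + q) with hy_def
  have hy0 : 0 < y := div_pos (by linarith) (by linarith)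
  set m : ℤ := ⌊Real.logb q y⌋ with hm_def
  -- m ≥ -1
  have hm1 : (-1 : ℤ) ≤ m := by
    rw [hm_def, Int.le_floor]
    push_cast
    rw [Real.logb, le_div_iff_of_neg hlogq]
    have hylt : y ≤ q⁻¹ := by
      rw [hy_def, div_le_iff₀ (by linarith)]
      rw [inv_mul_eq_div, le_div_iff₀ hq0]
      nlinarith
    calc Real.log y ≤ Real.log q⁻¹ := Real.log_le_log (by positivity) hylt
      _ = -1 * Real.log q := by rw [Real.log_inv]; ring
  -- set equality
  have hset : {ω | 1 - q ^ ⌊T ω / τ⌋ * (1 + q) ≤ x}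
      = {ω | T ω < ((m : ℝ) + 1) * τ} := by
    ext ω
    simp only [Set.mem_setOf_eq]
    set K : ℤ := ⌊T ω / τ⌋ with hK_def
    have hqK : (0:ℝ) < q ^ K := zpow_pos hq0 _
    constructor
    · intro h
      have h1 : y ≤ q ^ K := by
        rw [hy_def, div_le_iff₀ (by linarith)]; linarith
      have h2 : Real.log y ≤ (K : ℝ) * Real.log q := by
        rw [← Real.log_zpow]
        exact Real.log_le_log hy0 h1
      have h3 : (K : ℝ) ≤ Real.logb q y := by
        rw [Real.logb, le_div_iff_of_neg hlogq]; linarith [h2]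
      have h4 : K ≤ m := by rw [hm_def]; exact Int.le_floor.2 h3
      have h5 : T ω / τ < (K : ℝ) + 1 := Int.lt_floor_add_one _
      have h6 : (K : ℝ) ≤ (m : ℝ) := by exact_mod_cast h4
      rw [← div_lt_iff₀ hτ]
      calc T ω / τ < (K:ℝ) + 1 := h5
        _ ≤ (m:ℝ) + 1 := by linarith
    · intro h
      have h5 : T ω / τ < (m : ℝ) + 1 := by
        rwa [← div_lt_iff₀ hτ] at h
      have h4 : K ≤ m := by
        have : K < m + 1 := by
          rw [hK_def, Int.floor_lt]; push_cast; exact h5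
        omega
      have h3 : (K : ℝ) ≤ Real.logb q y := by
        have hKm : (K:ℝ) ≤ (m:ℝ) := by exact_mod_cast h4
        calc (K : ℝ) ≤ (m : ℝ) := hKm
          _ ≤ Real.logb q y := by rw [hm_def]; exact Int.floor_le _
      have h2 : Real.log y ≤ (K : ℝ) * Real.log q := by
        rw [Real.logb, le_div_iff_of_neg hlogq] at h3; linarith
      have h1 : y ≤ q ^ K := by
        have := Real.exp_le_exp.2 h2
        rwa [Real.exp_log hy0, ← Real.log_zpow, Real.exp_log hqK] at this
      rw [hy_def, div_le_iff₀ (by linarith)] at h1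
      linarith
  have hmc : (0:ℝ) ≤ (m:ℝ) + 1 := by
    have h0 : (0:ℤ) ≤ m + 1 := by omega
    exact_mod_cast h0
  rw [hset, measure_lt_of_cdf' μ T lam hTpos hcdf _ (mul_nonneg hmc hτ.le)]
  congr 2
  rw [show (-lam * (((m:ℝ)+1) * τ)) = ((m+1 : ℤ) : ℝ) * (-lam * τ) by push_cast; ring]
  rw [show (-lam*τ) = Real.log q by rw [hq_def, Real.log_exp], ← Real.log_zpow,
    Real.exp_log (zpow_pos hq0 _)]
end

section
/- Fix x ∈ (−1,1). As λτ → 0⁺, the quantity 1 − q^{⌊log_q((1−x)/(1+q))⌋ + 1}, where q = e^{−λτ}, converges to (x+1)/2. Hence the sampling distribution of the exponential interval-censoring PSR converges to Uniform(−1,1) as the inspection spacing shrinks. -/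
open Filter

/-- As `λτ → 0⁺` (with `s = λτ` and `q = e^{−s}`), the CDF of the exponential
interval-censoring PSR, `1 − q^{⌊log_q((1−x)/(1+q))⌋ + 1}`, converges to `(x+1)/2`,
the CDF of the uniform distribution on `(−1,1)`. -/
theorem psr_sampling_distribution_tendsto_uniform (x : ℝ) (hx : x ∈ Set.Ioo (-1 : ℝ) 1) :
    Tendsto (fun s : ℝ =>
        1 - Real.exp (-s) ^
          (⌊Real.logb (Real.exp (-s)) ((1 - x) / (1 + Real.exp (-s)))⌋ + 1))
      (nhdsWithin 0 (Set.Ioi 0)) (nhds ((x + 1) / 2)) := by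
  obtain ⟨hx1, hx2⟩ := hx
  have hexp : Tendsto (fun s : ℝ => Real.exp (-s)) (nhds 0) (nhds 1) := by
    simpa [Function.comp_def] using (Real.continuous_exp.comp continuous_neg).tendsto 0
  have hden : Tendsto (fun s : ℝ => 1 + Real.exp (-s)) (nhds 0) (nhds 2) := by
    have := (tendsto_const_nhds (x := (1:ℝ))).add hexp
    norm_num at this; exact this
  have hg : Tendsto (fun s : ℝ => 1 - (1 - x) / (1 + Real.exp (-s))) (nhds 0)
      (nhds ((x + 1) / 2)) := by
    have := (tendsto_const_nhds (x := (1:ℝ))).sub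
      ((tendsto_const_nhds (x := (1 - x))).div hden (by norm_num))
    convert this using 2
    · simp only [Pi.div_apply]
    · ring
  have hh : Tendsto (fun s : ℝ => 1 - (1 - x) / (1 + Real.exp (-s)) * Real.exp (-s)) (nhds 0)
      (nhds ((x + 1) / 2)) := by
    have := (tendsto_const_nhds (x := (1:ℝ))).sub
      (((tendsto_const_nhds (x := (1 - x))).div hden (by norm_num)).mul hexp)
    convert this using 2
    · simp only [Pi.div_apply]
    · ring
  refine tendsto_of_tendsto_of_tendsto_of_le_of_le'
    (hg.mono_left nhdsWithin_le_nhds) (hh.mono_left nhdsWithin_le_nhds) ?_ ?_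
  · -- lower bound: 1 - A ≤ 1 - q^n, i.e. q^n ≤ A
    filter_upwards [self_mem_nhdsWithin] with s hs
    set q := Real.exp (-s) with hq
    have hq0 : 0 < q := Real.exp_pos _
    have hq1 : q < 1 := Real.exp_lt_one_iff.mpr (by linarith [Set.mem_Ioi.mp hs])
    have hA0 : 0 < (1 - x) / (1 + q) := div_pos (by linarith) (by linarith)
    set L := Real.logb q ((1 - x) / (1 + q)) with hL
    have key : q ^ (⌊L⌋ + 1 : ℤ) ≤ q ^ L := by
      calc q ^ (⌊L⌋ + 1 : ℤ) = q ^ ((⌊L⌋ + 1 : ℤ) : ℝ) := (Real.rpow_intCast q _).symm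
        _ ≤ q ^ L := Real.rpow_le_rpow_of_exponent_ge hq0 hq1.le
            (by push_cast; linarith [Int.lt_floor_add_one L])
    have hqL : q ^ L = (1 - x) / (1 + q) := Real.rpow_logb hq0 hq1.ne hA0
    rw [hqL] at key
    linarith
  · -- upper bound: 1 - q^n ≤ 1 - A*q, i.e. A*q ≤ q^n
    filter_upwards [self_mem_nhdsWithin] with s hs
    set q := Real.exp (-s) with hq
    have hq0 : 0 < q := Real.exp_pos _
    have hq1 : q < 1 := Real.exp_lt_one_iff.mpr (by linarith [Set.mem_Ioi.mp hs])
    have hA0 : 0 < (1 - x) / (1 + q) := div_pos (by linarith) (by linarith)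
    set L := Real.logb q ((1 - x) / (1 + q)) with hL
    have key : q ^ L * q ≤ q ^ (⌊L⌋ + 1 : ℤ) := by
      calc q ^ L * q = q ^ (L + 1) := by rw [Real.rpow_add hq0, Real.rpow_one]
        _ ≤ q ^ ((⌊L⌋ + 1 : ℤ) : ℝ) := Real.rpow_le_rpow_of_exponent_ge hq0 hq1.le
            (by push_cast; linarith [Int.floor_le L])
        _ = q ^ (⌊L⌋ + 1 : ℤ) := Real.rpow_intCast q _
    have hqL : q ^ L = (1 - x) / (1 + q) := Real.rpow_logb hq0 hq1.ne hA0
    rw [hqL] at key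
    linarith
end

section
/- Let F be a CDF on (0,∞) and 0 ≤ c_j < c_{j+1} with f_j = F(c_j), f_{j+1} = F(c_{j+1}). Then ∫_{(c_j, c_{j+1}]} (F(t) + F(t−) − f_j − f_{j+1}) dF(t) = 0, where F(t−) is the left limit of F at t. -/
/-!
With `ν` the restriction of `dF` to `(a, b]`, one has `F t - F a = ν (Iic t)` and
`F (t-) - F a = ν (Iio t)` for `t ∈ (a, b]`. So the two integrals are the `ν ⊗ ν`-masses of
`{s ≤ t}` and `{s < t}`; the second is the mirror image of the complement of the first, hence
they add up to `ν(univ)² = (F b - F a)²`, which is the integral of the constant `F b - F a`.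
-/

open Set MeasureTheory

section LinearOrder

variable {α : Type*} [LinearOrder α] [TopologicalSpace α] [OrderClosedTopology α]
  [SecondCountableTopology α] [MeasurableSpace α] [OpensMeasurableSpace α]

theorem lintegral_measure_Iic_add_lintegral_measure_Iio (ν : Measure α) [SFinite ν] :
    ∫⁻ t, ν (Iic t) ∂ν + ∫⁻ t, ν (Iio t) ∂ν = ν univ * ν univ := by
  have hle : MeasurableSet {p : α × α | p.2 ≤ p.1} := measurableSet_le measurable_snd measurable_fst
  have hlt : MeasurableSet {p : α × α | p.1 < p.2} := measurableSet_lt measurable_fst measurable_snd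
  have hIic : ∫⁻ t, ν (Iic t) ∂ν = ν.prod ν {p | p.2 ≤ p.1} := (Measure.prod_apply hle).symm
  have hIio : ∫⁻ t, ν (Iio t) ∂ν = ν.prod ν {p | p.1 < p.2} := by
    rw [← Measure.prod_swap, Measure.map_apply measurable_swap hlt]
    exact (Measure.prod_apply (measurable_swap hlt)).symm
  have hcompl : {p : α × α | p.2 ≤ p.1}ᶜ = {p | p.1 < p.2} := by
    ext p; simp
  rw [hIic, hIio, ← hcompl, measure_add_measure_compl hle, ← univ_prod_univ, Measure.prod_prod]

theorem integral_measureReal_Iic_add_integral_measureReal_Iio (ν : Measure α)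
    [IsFiniteMeasure ν] :
    ∫ t, ν.real (Iic t) ∂ν + ∫ t, ν.real (Iio t) ∂ν = ν.real univ ^ 2 := by
  have hsum := lintegral_measure_Iic_add_lintegral_measure_Iio ν
  have hfin := ENNReal.add_ne_top.1
    (hsum ▸ ENNReal.mul_ne_top (measure_ne_top ν univ) (measure_ne_top ν univ))
  have hIic : AEMeasurable (fun t => ν (Iic t)) ν :=
    (measurable_measure_prodMk_left (measurableSet_le measurable_snd measurable_fst)).aemeasurable
  have hIio : AEMeasurable (fun t => ν (Iio t)) ν :=
    (measurable_measure_prodMk_left (measurableSet_lt measurable_snd measurable_fst)).aemeasurable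
  simp only [measureReal_def]
  rw [integral_toReal hIic (ae_of_all _ fun _ => measure_lt_top _ _),
    integral_toReal hIio (ae_of_all _ fun _ => measure_lt_top _ _),
    ← ENNReal.toReal_add hfin.1 hfin.2, hsum, ENNReal.toReal_mul, sq]

end LinearOrder

namespace StieltjesFunction

variable (F : StieltjesFunction ℝ) {a b t : ℝ}

theorem measureReal_restrict_Ioc_Iic (ht : t ∈ Ioc a b) :
    (F.measure.restrict (Ioc a b)).real (Iic t) = F t - F a := by
  rw [measureReal_restrict_apply measurableSet_Iic, Iic_inter_Ioc_of_le ht.2, measureReal_def,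
    measure_Ioc, ENNReal.toReal_ofReal (sub_nonneg.2 (F.mono ht.1.le))]

theorem measureReal_restrict_Ioc_Iio (ht : t ∈ Ioc a b) :
    (F.measure.restrict (Ioc a b)).real (Iio t) = Function.leftLim F t - F a := by
  have hIoo : Iio t ∩ Ioc a b = Ioo a t := by
    ext s
    simp only [mem_inter_iff, mem_Iio, mem_Ioc, mem_Ioo]
    exact ⟨fun h => ⟨h.2.1, h.1⟩, fun h => ⟨h.2, h.1, h.2.le.trans ht.2⟩⟩
  rw [measureReal_restrict_apply measurableSet_Iio, hIoo, measureReal_def,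
    measure_Ioo, ENNReal.toReal_ofReal (sub_nonneg.2 (F.mono.le_leftLim ht.1))]

theorem measureReal_Ioc (hab : a ≤ b) : F.measure.real (Ioc a b) = F b - F a := by
  rw [measureReal_def, measure_Ioc, ENNReal.toReal_ofReal (sub_nonneg.2 (F.mono hab))]

theorem setIntegral_sub_add_setIntegral_leftLim_sub (hab : a ≤ b) :
    ∫ t in Ioc a b, (F t - F a) ∂F.measure
      + ∫ t in Ioc a b, (Function.leftLim F t - F a) ∂F.measure = (F b - F a) ^ 2 := by
  have := isFiniteMeasure_restrict.2 (F.measure_Ioc a b ▸ ENNReal.ofReal_ne_top)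
  rw [← setIntegral_congr_fun measurableSet_Ioc fun t ht => F.measureReal_restrict_Ioc_Iic ht,
    ← setIntegral_congr_fun measurableSet_Ioc fun t ht => F.measureReal_restrict_Ioc_Iio ht,
    integral_measureReal_Iic_add_integral_measureReal_Iio, measureReal_restrict_apply_univ,
    F.measureReal_Ioc hab]

end StieltjesFunction

theorem psr_centered_integral_zero_general (F : StieltjesFunction ℝ)
    (a b : ℝ) (hab : a < b) :
    ∫ t in Set.Ioc a b, (F t + Function.leftLim F t - F a - F b) ∂F.measure = 0 := by
  have hF : IntegrableOn (fun t => F t - F a) (Ioc a b) F.measure :=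
    ((F.mono.locallyIntegrable.integrableOn_isCompact isCompact_Icc).mono_set
      Ioc_subset_Icc_self).sub (integrableOn_const measure_Ioc_lt_top.ne)
  have hleftLim : IntegrableOn (fun t => Function.leftLim F t - F a) (Ioc a b) F.measure :=
    ((F.mono.leftLim.locallyIntegrable.integrableOn_isCompact isCompact_Icc).mono_set
      Ioc_subset_Icc_self).sub (integrableOn_const measure_Ioc_lt_top.ne)
  have hsum : IntegrableOn (fun t => (F t - F a) + (Function.leftLim F t - F a)) (Ioc a b)
      F.measure := hF.add hleftLim
  calc ∫ t in Ioc a b, (F t + Function.leftLim F t - F a - F b) ∂F.measure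
      = ∫ t in Ioc a b, ((F t - F a) + (Function.leftLim F t - F a) - (F b - F a)) ∂F.measure := by
        congr 1; ext t; ring
    _ = (F b - F a) ^ 2 - F.measure.real (Ioc a b) • (F b - F a) := by
        rw [integral_sub hsum (integrableOn_const measure_Ioc_lt_top.ne),
          integral_add hF hleftLim, F.setIntegral_sub_add_setIntegral_leftLim_sub hab.le,
          setIntegral_const]
    _ = 0 := by rw [F.measureReal_Ioc hab.le, smul_eq_mul, sq, sub_self]

/-- For any CDF `F` and `0 ≤ c_j < c_{j+1}`,
`∫_{(c_j, c_{j+1}]} (F(t) + F(t−) − F(c_j) − F(c_{j+1})) dF(t) = 0`. -/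
theorem psr_centered_integral_zero (F : StieltjesFunction ℝ)
    (a b : ℝ) (ha : 0 ≤ a) (hab : a < b) :
    ∫ t in Set.Ioc a b, (F t + Function.leftLim F t - F a - F b) ∂F.measure = 0 :=
  psr_centered_integral_zero_general F a b hab
end

section
/- For right-censored data with a single inspection time C (K=1, π₀=1, π₁=0), if T has continuous CDF F independent of C, the conditional second moment of the PSR given C equals v₀(C)·F(C)³ + F(C)(1 − F(C)), where v₀(C) = F(C)^{−3} ∫_{(0,C]} (2F(t) − F(C))² dF(t); in particular for continuous F this equals F(C)³/3 + F(C)(1 − F(C)). -/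
open MeasureTheory Filter

/-!
For continuous `F`, the pushforward of `F.measure` restricted to `(a, b]` under `F` is Lebesgue
measure on `(F a, F b]` (the probability integral transform). Hence the uncensored part `T ≤ c`
contributes `∫₀^{F c} (2u - 1)² du`, the censored part `T > c` contributes `F(c)² (1 - F(c))`,
and the same substitution gives `∫_{(0,c]} (2F - F(c))² dF = F(c)³/3`.
-/

open Set Topology

theorem integral_two_mul_sub_sq (k a b : ℝ) :
    ∫ u in a..b, (2 * u - k) ^ 2 = ((2 * b - k) ^ 3 - (2 * a - k) ^ 3) / 6 := by
  rw [intervalIntegral.integral_comp_mul_sub (fun u => u ^ 2) two_ne_zero, integral_pow]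
  ring

namespace StieltjesFunction

variable (F : StieltjesFunction ℝ)

theorem exists_preimage_Iic_inter_Ioc_eq_Ioc (hF : Continuous F) {a b x : ℝ} (hab : a ≤ b)
    (hx : F a ≤ x) : ∃ s, F s = min x (F b) ∧ F ⁻¹' Iic x ∩ Ioc a b = Ioc a s := by
  set A := F ⁻¹' Iic x ∩ Icc a b
  have hAne : A.Nonempty := ⟨a, hx, le_rfl, hab⟩
  have hAbdd : BddAbove A := ⟨b, fun t ht => ht.2.2⟩
  have hsA : sSup A ∈ A :=
    ((isClosed_le hF continuous_const).inter isClosed_Icc).csSup_mem hAne hAbdd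
  refine ⟨sSup A, le_antisymm (le_min hsA.1 (F.mono hsA.2.2)) ?_, ?_⟩
  · rcases le_total (F b) x with hbx | hxb
    · exact (min_le_right _ _).trans (F.mono (le_csSup hAbdd ⟨hbx, hab, le_rfl⟩))
    · obtain ⟨t, ht, hFt⟩ := intermediate_value_Icc hab hF.continuousOn ⟨hx, hxb⟩
      exact (min_le_left _ _).trans (hFt ▸ F.mono (le_csSup hAbdd ⟨hFt.le, ht⟩))
  · ext t
    refine ⟨fun ⟨hFt, hat, htb⟩ => ⟨hat, le_csSup hAbdd ⟨hFt, hat.le, htb⟩⟩,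
      fun ⟨hat, hts⟩ => ⟨(F.mono hts).trans hsA.1, hat, hts.trans hsA.2.2⟩⟩

theorem map_restrict_Ioc (hF : Continuous F) {a b : ℝ} (hab : a ≤ b) :
    (F.measure.restrict (Ioc a b)).map F = volume.restrict (Ioc (F a) (F b)) := by
  have hFm : Measurable F := hF.measurable
  have : IsFiniteMeasure (F.measure.restrict (Ioc a b)) :=
    isFiniteMeasure_restrict.2 measure_Ioc_lt_top.ne
  refine Measure.ext_of_Iic _ _ fun x => ?_
  rw [Measure.map_apply hFm measurableSet_Iic, Measure.restrict_apply (hFm measurableSet_Iic),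
    Measure.restrict_apply measurableSet_Iic]
  rcases lt_or_ge x (F a) with hx | hx
  · have h1 : F ⁻¹' Iic x ∩ Ioc a b = ∅ :=
      eq_empty_of_forall_notMem fun t ⟨hFt, hat, _⟩ => (hx.trans_le (F.mono hat.le)).not_ge hFt
    have h2 : Iic x ∩ Ioc (F a) (F b) = ∅ :=
      eq_empty_of_forall_notMem fun u ⟨hux, hau, _⟩ => (hx.trans hau).not_ge hux
    simp [h1, h2]
  · obtain ⟨s, hFs, hs⟩ := F.exists_preimage_Iic_inter_Ioc_eq_Ioc hF hab hx
    rw [hs, inter_comm, Ioc_inter_Iic, F.measure_Ioc, Real.volume_Ioc, hFs, min_comm]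

theorem setIntegral_comp_Ioc (hF : Continuous F) {a b : ℝ} (hab : a ≤ b) {g : ℝ → ℝ}
    (hg : AEStronglyMeasurable g (volume.restrict (Ioc (F a) (F b)))) :
    ∫ t in Ioc a b, g (F t) ∂F.measure = ∫ u in Ioc (F a) (F b), g u := by
  rw [← F.map_restrict_Ioc hF hab] at hg ⊢
  exact (integral_map hF.measurable.aemeasurable hg).symm

theorem setIntegral_Ioc_two_mul_sub_sq (hF : Continuous F) {a b : ℝ} (hab : a ≤ b)
    (hFa : F a = 0) (k : ℝ) :
    ∫ t in Ioc a b, (2 * F t - k) ^ 2 ∂F.measure = ((2 * F b - k) ^ 3 + k ^ 3) / 6 := by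
  rw [F.setIntegral_comp_Ioc hF hab (g := fun u => (2 * u - k) ^ 2) (by fun_prop), hFa,
    ← intervalIntegral.integral_of_le (hFa ▸ F.mono hab), integral_two_mul_sub_sq]
  ring

end StieltjesFunction

noncomputable def rightCensoredPSR (F : ℝ → ℝ) (c t : ℝ) : ℝ :=
  if t ≤ c then 2 * F t - 1 else F c

theorem measurable_rightCensoredPSR {F : ℝ → ℝ} (hF : Measurable F) (c : ℝ) :
    Measurable (rightCensoredPSR F c) :=
  Measurable.ite measurableSet_Iic (by fun_prop) measurable_const

theorem integral_rightCensoredPSR_sq (F : StieltjesFunction ℝ) (hF : Continuous F)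
    (hFtop : Tendsto F atTop (𝓝 1)) {a c : ℝ} (hac : a ≤ c) (hFa : F a = 0)
    (hsupp : ∀ᵐ t ∂F.measure, a < t) :
    ∫ t, rightCensoredPSR F c t ^ 2 ∂F.measure = F c ^ 3 / 3 + F c * (1 - F c) := by
  have hFc : F c ≤ 1 := F.mono.ge_of_tendsto hFtop c
  have hobs : EqOn (fun t => rightCensoredPSR F c t ^ 2) (fun t => (2 * F t - 1) ^ 2) (Ioc a c) :=
    fun t ht => by simp [rightCensoredPSR, ht.2]
  have hcens : EqOn (fun t => rightCensoredPSR F c t ^ 2) (fun _ => F c ^ 2) (Ioi c) :=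
    fun t ht => by simp [rightCensoredPSR, not_le.2 (mem_Ioi.1 ht)]
  have hIoi : F.measure (Ioi c) = ENNReal.ofReal (1 - F c) := F.measure_Ioi hFtop c
  rw [← Measure.restrict_eq_self_of_ae_mem (s := Ioi a) hsupp, ← Ioc_union_Ioi_eq_Ioi hac,
    setIntegral_union Ioc_disjoint_Ioi_same measurableSet_Ioi
      ((Continuous.integrableOn_Ioc (by fun_prop)).congr_fun hobs.symm measurableSet_Ioc)
      ((integrableOn_const (by simp [hIoi])).congr_fun hcens.symm measurableSet_Ioi),
    setIntegral_congr_fun measurableSet_Ioc hobs, setIntegral_congr_fun measurableSet_Ioi hcens,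
    F.setIntegral_Ioc_two_mul_sub_sq hF hac hFa, setIntegral_const, measureReal_def, hIoi,
    ENNReal.toReal_ofReal (sub_nonneg.2 hFc), smul_eq_mul]
  ring

theorem psr_right_censored_second_moment_general {Ω : Type*} [MeasurableSpace Ω]
    (μ : Measure Ω)
    (F : StieltjesFunction ℝ) (hcont : Continuous F) (hF0 : F 0 = 0)
    (hFtop : Tendsto F atTop (nhds 1))
    (T : Ω → ℝ) (hT : Measurable T) (hTpos : ∀ ω, 0 < T ω)
    (hlaw : μ.map T = F.measure)
    (c : ℝ) (hc : 0 < c) :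
    (∫ ω, (if T ω ≤ c then 2 * F (T ω) - 1 else F c) ^ 2 ∂μ
        = ((∫ t in Set.Ioc 0 c, (2 * F t - F c) ^ 2 ∂F.measure) / (F c) ^ 3) * (F c) ^ 3
            + F c * (1 - F c)) ∧
    ∫ ω, (if T ω ≤ c then 2 * F (T ω) - 1 else F c) ^ 2 ∂μ
      = (F c) ^ 3 / 3 + F c * (1 - F c) := by
  have hsupp : ∀ᵐ t ∂F.measure, 0 < t :=
    hlaw ▸ (ae_map_iff hT.aemeasurable measurableSet_Ioi).2 (ae_of_all _ hTpos)
  have hmoment : ∫ ω, rightCensoredPSR F c (T ω) ^ 2 ∂μ = F c ^ 3 / 3 + F c * (1 - F c) := by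
    rw [← integral_rightCensoredPSR_sq F hcont hFtop hc.le hF0 hsupp, ← hlaw,
      integral_map hT.aemeasurable
      ((measurable_rightCensoredPSR hcont.measurable c).pow_const 2).aestronglyMeasurable]
  refine ⟨?_, hmoment⟩
  rw [F.setIntegral_Ioc_two_mul_sub_sq hcont hc.le hF0, div_mul_cancel_of_imp fun h => by
    simp [(pow_eq_zero_iff three_ne_zero).1 h]]
  exact hmoment.trans (by ring)

/-- Right-censored data with a single inspection time `C = c`: if `T` has continuous
CDF `F`, the conditional second moment of the PSR given `C = c` equals
`v₀(c)·F(c)³ + F(c)(1 − F(c))` with `v₀(c) = F(c)^{−3} ∫_{(0,c]} (2F(t) − F(c))² dF(t)`,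
and for continuous `F` this equals `F(c)³/3 + F(c)(1 − F(c))`. -/
theorem psr_right_censored_second_moment {Ω : Type*} [MeasurableSpace Ω]
    (μ : Measure Ω) [IsProbabilityMeasure μ]
    (F : StieltjesFunction ℝ) (hcont : Continuous F) (hF0 : F 0 = 0)
    (hFtop : Tendsto F atTop (nhds 1))
    (T : Ω → ℝ) (hT : Measurable T) (hTpos : ∀ ω, 0 < T ω)
    (hlaw : μ.map T = F.measure)
    (c : ℝ) (hc : 0 < c) :
    (∫ ω, (if T ω ≤ c then 2 * F (T ω) - 1 else F c) ^ 2 ∂μ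
        = ((∫ t in Set.Ioc 0 c, (2 * F t - F c) ^ 2 ∂F.measure) / (F c) ^ 3) * (F c) ^ 3
            + F c * (1 - F c)) ∧
    ∫ ω, (if T ω ≤ c then 2 * F (T ω) - 1 else F c) ^ 2 ∂μ
      = (F c) ^ 3 / 3 + F c * (1 - F c) :=
  psr_right_censored_second_moment_general μ F hcont hF0 hFtop T hT hTpos hlaw c hc
end

section
/- Let T be a nonnegative random variable with CDF F and let (L,U] be the random interval among (C_j, C_{j+1}], j = 0,…,K, containing T, where the inspection process (K, C₁ < ⋯ < C_K) is independent of T (C₀ = 0, C_{K+1} = ∞). Then E[F(L) + F(U) − 1] = 0. -/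
open MeasureTheory ProbabilityTheory Filter

private lemma sum_tele (b : ℕ → ℝ) (n : ℕ) :
    ∑ j ∈ Finset.Icc 1 n, (b (j+1) - b (j-1)) = b (n+1) + b n - b 1 - b 0 := by
  induction n with
  | zero => simp
  | succ n ih =>
    rw [Finset.sum_Icc_succ_top (by omega : 1 ≤ n+1), ih]
    simp only [Nat.add_sub_cancel]
    ring

private lemma sum_tele2 (w : ℕ → ℝ) (n : ℕ) :
    ∑ j ∈ Finset.Icc 1 n, (w j - w (j+1)) = w 1 - w (n+1) := by
  induction n with
  | zero => simp
  | succ n ih =>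
    rw [Finset.sum_Icc_succ_top (by omega : 1 ≤ n+1), ih]
    ring

private lemma measurable_nat_comp {α β : Type*} [MeasurableSpace α] [MeasurableSpace β]
    {h : α → ℕ} (hh : Measurable h) {g : ℕ → α → β} (hg : ∀ k, Measurable (g k)) :
    Measurable fun a => g (h a) a := by
  intro s hs
  have : (fun a => g (h a) a) ⁻¹' s = ⋃ k, h ⁻¹' {k} ∩ g k ⁻¹' s := by
    ext a
    simp only [Set.mem_preimage, Set.mem_iUnion, Set.mem_inter_iff, Set.mem_singleton_iff]
    constructor
    · intro ha; exact ⟨h a, rfl, ha⟩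
    · rintro ⟨k, hk, ha⟩; rwa [hk]
  rw [this]
  exact MeasurableSet.iUnion fun k => (hh (measurableSet_singleton k)).inter (hg k hs)

private lemma chain_mono {m : ℕ} {c : ℕ → ℝ} (h : ∀ j, j < m → c j < c (j+1)) :
    ∀ {i j : ℕ}, i ≤ j → j ≤ m → c i ≤ c j := by
  intro i j
  induction j with
  | zero => intro hij _; simp [Nat.le_zero.mp hij]
  | succ j ih =>
    intro hij hjm
    rcases Nat.eq_or_lt_of_le hij with rfl | hlt
    · exact le_refl _
    · exact (ih (Nat.lt_succ_iff.mp hlt) (le_trans (Nat.le_succ j) hjm)).trans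
        (h j (by omega)).le

/-- Mixed-case interval censoring: `T` has CDF `F` (with `F(0)=0`, `F(∞)=1`) and is
independent of the inspection process `(K, C₁ < ⋯ < C_K)` (with `C₀ = 0`,
`C_{K+1} = ∞`). If `(L, U] = (C_J, C_{J+1}]` is the random interval containing `T`
(interpreting `F(C_{K+1}) = F(∞) = 1`), then `E[F(L) + F(U) − 1] = 0`. -/
theorem psr_mixed_case_mean_zero {Ω : Type*} [MeasurableSpace Ω]
    (μ : Measure Ω) [IsProbabilityMeasure μ]
    (F : ℝ → ℝ) (hmono : Monotone F) (hF0 : F 0 = 0)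
    (hFtop : Tendsto F atTop (nhds 1))
    (T : Ω → ℝ) (hT : Measurable T) (hTpos : ∀ ω, 0 < T ω)
    (hcdf : ∀ t : ℝ, μ {ω | T ω ≤ t} = ENNReal.ofReal (F t))
    (K : Ω → ℕ) (C : Ω → ℕ → ℝ) (hK : Measurable K) (hC : Measurable C)
    (hK1 : ∀ ω, 1 ≤ K ω) (hC0 : ∀ ω, C ω 0 = 0)
    (hCmono : ∀ ω, ∀ j < K ω, C ω j < C ω (j + 1))
    (hindep : IndepFun T (fun ω => (K ω, C ω)) μ)
    (J : Ω → ℕ) (hJ : Measurable J)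
    (hJle : ∀ ω, J ω ≤ K ω)
    (hJlow : ∀ ω, C ω (J ω) < T ω)
    (hJhigh : ∀ ω, J ω < K ω → T ω ≤ C ω (J ω + 1)) :
    ∫ ω, (F (C ω (J ω)) + (if J ω = K ω then 1 else F (C ω (J ω + 1))) - 1) ∂μ = 0 := by
  -- basic facts about F
  have hF_le1 : ∀ a, F a ≤ 1 := fun a =>
    ge_of_tendsto hFtop (eventually_atTop.2 ⟨a, fun b hb => hmono hb⟩)
  have hF_nonneg : ∀ a : ℝ, 0 ≤ a → 0 ≤ F a := fun a ha => hF0 ▸ hmono ha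
  -- clamped F
  set Fp : ℝ → ℝ := fun a => max (min (F a) 1) 0 with hFp_def
  have hFpF : ∀ a : ℝ, 0 ≤ a → Fp a = F a := by
    intro a ha
    simp [hFp_def, min_eq_left (hF_le1 a), max_eq_left (hF_nonneg a ha)]
  have hFp0 : Fp 0 = 0 := by simp [hFp_def, hF0]
  have hFp_mono : Monotone Fp := fun a b h =>
    max_le_max (min_le_min (hmono h) le_rfl) le_rfl
  have hFp_nonneg : ∀ a, 0 ≤ Fp a := fun a => le_max_right _ _
  have hFp_le1 : ∀ a, Fp a ≤ 1 := fun a => max_le (min_le_right _ _) zero_le_one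
  have hFp_meas : Measurable Fp := hFp_mono.measurable
  -- the B function
  set B : ℕ → (ℕ → ℝ) → ℕ → ℝ := fun m c i => if i = m + 1 then 1 else Fp (c i) with hB_def
  -- the auxiliary functions on ℝ × (ℕ × (ℕ → ℝ))
  set g : ℕ → ℝ × (ℕ × (ℕ → ℝ)) → ℝ := fun k p =>
    (∑ j ∈ Finset.Icc 1 k,
      (B k p.2.2 (j+1) - B k p.2.2 (j-1)) * (if p.2.2 j < p.1 then (1:ℝ) else 0))
      + B k p.2.2 1 - 1 with hg_def
  set f : ℝ × (ℕ × (ℕ → ℝ)) → ℝ := fun p => g p.2.1 p with hf_def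
  -- C is monotone up to K
  have hCm : ∀ ω, ∀ {i j : ℕ}, i ≤ j → j ≤ K ω → C ω i ≤ C ω j :=
    fun ω => chain_mono (hCmono ω)
  have hCnn : ∀ ω, ∀ j, j ≤ K ω → 0 ≤ C ω j := by
    intro ω j hj
    have := hCm ω (Nat.zero_le j) hj
    rwa [hC0] at this
  -- pointwise identity
  have hpt : ∀ ω, F (C ω (J ω)) + (if J ω = K ω then 1 else F (C ω (J ω + 1))) - 1
      = f (T ω, (K ω, C ω)) := by
    intro ω
    have hJK := hJle ω
    have key : ∀ j ∈ Finset.Icc 1 (K ω), ((if C ω j < T ω then (1:ℝ) else 0)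
        = if j ≤ J ω then (1:ℝ) else 0) := by
      intro j hj
      rw [Finset.mem_Icc] at hj
      congr 1
      simp only [eq_iff_iff]
      constructor
      · intro hlt
        by_contra hn
        push_neg at hn
        have hJK' : J ω < K ω := lt_of_lt_of_le hn hj.2
        have h1 := hJhigh ω hJK'
        have h2 : C ω (J ω + 1) ≤ C ω j := hCm ω hn hj.2
        linarith
      · intro hle
        exact lt_of_le_of_lt (hCm ω hle hJK) (hJlow ω)
    have step1 : f (T ω, (K ω, C ω))
        = (∑ j ∈ Finset.Icc 1 (K ω),
            (B (K ω) (C ω) (j+1) - B (K ω) (C ω) (j-1)) * (if j ≤ J ω then (1:ℝ) else 0))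
          + B (K ω) (C ω) 1 - 1 := by
      simp only [hf_def, hg_def]
      congr 1
      congr 1
      exact Finset.sum_congr rfl fun j hj => by rw [key j hj]
    have step2 : (∑ j ∈ Finset.Icc 1 (K ω),
            (B (K ω) (C ω) (j+1) - B (K ω) (C ω) (j-1)) * (if j ≤ J ω then (1:ℝ) else 0))
        = ∑ j ∈ Finset.Icc 1 (J ω), (B (K ω) (C ω) (j+1) - B (K ω) (C ω) (j-1)) := by
      have hfilter : Finset.filter (fun j => j ≤ J ω) (Finset.Icc 1 (K ω))
          = Finset.Icc 1 (J ω) := by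
        ext j
        simp only [Finset.mem_filter, Finset.mem_Icc]
        omega
      rw [← hfilter, Finset.sum_filter]
      apply Finset.sum_congr rfl
      intro j _
      by_cases h : j ≤ J ω <;> simp [h]
    have hB0 : B (K ω) (C ω) 0 = 0 := by
      simp only [hB_def]
      rw [if_neg (by omega), hC0, hFp0]
    have hBn : B (K ω) (C ω) (J ω) = F (C ω (J ω)) := by
      simp only [hB_def]
      rw [if_neg (by omega), hFpF _ (hCnn ω _ hJK)]
    have hBn1 : B (K ω) (C ω) (J ω + 1)
        = if J ω = K ω then 1 else F (C ω (J ω + 1)) := by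
      simp only [hB_def]
      by_cases h : J ω = K ω
      · rw [if_pos (by omega), if_pos h]
      · rw [if_neg (by omega), if_neg h, hFpF _ (hCnn ω _ (by omega))]
    rw [step1, step2, sum_tele, hB0, hBn, hBn1]
    ring
  -- measurability of f
  have hB_meas : ∀ k i, Measurable fun p : ℝ × ℕ × (ℕ → ℝ) => B k p.2.2 i := by
    intro k i
    simp only [hB_def]
    split_ifs
    · exact measurable_const
    · exact hFp_meas.comp ((measurable_pi_apply _).comp (measurable_snd.comp measurable_snd))
  have hg_meas : ∀ k, Measurable (g k) := by
    intro k
    apply Measurable.sub _ measurable_const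
    apply Measurable.add _ (hB_meas k 1)
    apply Finset.measurable_sum
    intro j _
    have hm1 : Measurable fun p : ℝ × ℕ × (ℕ → ℝ) => p.2.2 j :=
      (measurable_pi_apply j).comp (measurable_snd.comp measurable_snd)
    have hm2 : Measurable fun p : ℝ × ℕ × (ℕ → ℝ) => p.1 := measurable_fst
    exact ((hB_meas k (j+1)).sub (hB_meas k (j-1))).mul
      (Measurable.ite (measurableSet_lt hm1 hm2) measurable_const measurable_const)
  have hf_meas : Measurable f := by
    have : f = fun p => g p.2.1 p := hf_def
    rw [this]
    exact measurable_nat_comp (measurable_fst.comp measurable_snd) hg_meas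
  -- the pair law is a product law
  have hX : Measurable fun ω => (K ω, C ω) := hK.prodMk hC
  have hpair : μ.map (fun ω => (T ω, (K ω, C ω)))
      = (μ.map T).prod (μ.map (fun ω => (K ω, C ω))) :=
    (indepFun_iff_map_prod_eq_prod_map_map hT.aemeasurable hX.aemeasurable).mp hindep
  set τ := μ.map T with hτ_def
  set ν := μ.map (fun ω => (K ω, C ω)) with hν_def
  have hτ_prob : IsProbabilityMeasure τ := Measure.isProbabilityMeasure_map hT.aemeasurable
  have hν_prob : IsProbabilityMeasure ν := Measure.isProbabilityMeasure_map hX.aemeasurable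
  -- the good set
  set S : Set (ℕ × (ℕ → ℝ)) :=
    {x | 1 ≤ x.1 ∧ x.2 0 = 0 ∧ ∀ j, j < x.1 → x.2 j < x.2 (j+1)} with hS_def
  have hS_meas : MeasurableSet S := by
    have h3 : ∀ j : ℕ, MeasurableSet {x : ℕ × (ℕ → ℝ) | j < x.1 → x.2 j < x.2 (j+1)} := by
      intro j
      have hA : MeasurableSet {x : ℕ × (ℕ → ℝ) | j < x.1} := by
        have : Measurable fun x : ℕ × (ℕ → ℝ) => x.1 := measurable_fst
        exact this (MeasurableSpace.measurableSet_top)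
      have hm1 : Measurable fun x : ℕ × (ℕ → ℝ) => x.2 j :=
        (measurable_pi_apply j).comp measurable_snd
      have hm2 : Measurable fun x : ℕ × (ℕ → ℝ) => x.2 (j+1) :=
        (measurable_pi_apply (j+1)).comp measurable_snd
      have hB' : MeasurableSet {x : ℕ × (ℕ → ℝ) | x.2 j < x.2 (j+1)} := measurableSet_lt hm1 hm2
      have heq : {x : ℕ × (ℕ → ℝ) | j < x.1 → x.2 j < x.2 (j+1)}
          = {x : ℕ × (ℕ → ℝ) | j < x.1}ᶜ ∪ {x : ℕ × (ℕ → ℝ) | x.2 j < x.2 (j+1)} := by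
        ext x; simp [imp_iff_not_or]
      rw [heq]
      exact hA.compl.union hB'
    have h1 : MeasurableSet {x : ℕ × (ℕ → ℝ) | 1 ≤ x.1} := by
      have : Measurable fun x : ℕ × (ℕ → ℝ) => x.1 := measurable_fst
      exact this (MeasurableSpace.measurableSet_top)
    have h2 : MeasurableSet {x : ℕ × (ℕ → ℝ) | x.2 0 = 0} := by
      have hm0 : Measurable fun x : ℕ × (ℕ → ℝ) => x.2 0 :=
        (measurable_pi_apply 0).comp measurable_snd
      exact hm0 (measurableSet_singleton 0)
    have hSeq : S = {x : ℕ × (ℕ → ℝ) | 1 ≤ x.1} ∩ ({x : ℕ × (ℕ → ℝ) | x.2 0 = 0}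
        ∩ ⋂ j, {x : ℕ × (ℕ → ℝ) | j < x.1 → x.2 j < x.2 (j+1)}) := by
      ext x
      simp only [hS_def, Set.mem_setOf_eq, Set.mem_inter_iff, Set.mem_iInter]
    rw [hSeq]
    exact h1.inter (h2.inter (MeasurableSet.iInter h3))
  have hν_S : ν Sᶜ = 0 := by
    rw [hν_def, Measure.map_apply hX hS_meas.compl]
    have : (fun ω => (K ω, C ω)) ⁻¹' Sᶜ = ∅ := by
      ext ω
      simp only [Set.mem_preimage, Set.mem_compl_iff, Set.mem_empty_iff_false, iff_false,
        not_not, hS_def, Set.mem_setOf_eq]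
      exact ⟨hK1 ω, hC0 ω, hCmono ω⟩
    rw [this]; simp
  have hprod_ae : ∀ᵐ p ∂(τ.prod ν), p.2 ∈ S := by
    rw [ae_iff]
    have : {p : ℝ × ℕ × (ℕ → ℝ) | ¬ p.2 ∈ S} = Set.univ ×ˢ Sᶜ := by
      ext p; simp
    rw [this, Measure.prod_prod, hν_S, mul_zero]
  -- the uniform bound on f over good points
  have hbound : ∀ p : ℝ × ℕ × (ℕ → ℝ), p.2 ∈ S → |f p| ≤ 4 := by
    intro p hp
    obtain ⟨t, m, c⟩ := p
    obtain ⟨hm1, hc0, hcs⟩ := hp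
    simp only at hm1 hc0 hcs
    have hcm : ∀ {i j : ℕ}, i ≤ j → j ≤ m → c i ≤ c j := chain_mono hcs
    have hcnn : ∀ j, j ≤ m → 0 ≤ c j := fun j hj => hc0 ▸ hcm (Nat.zero_le j) hj
    have hBrange : ∀ i, 0 ≤ B m c i ∧ B m c i ≤ 1 := by
      intro i
      simp only [hB_def]
      split_ifs
      · exact ⟨zero_le_one, le_refl 1⟩
      · exact ⟨hFp_nonneg _, hFp_le1 _⟩
    have hterm : ∀ j ∈ Finset.Icc 1 m,
        (0:ℝ) ≤ (B m c (j+1) - B m c (j-1)) * (if c j < t then (1:ℝ) else 0) ∧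
        (B m c (j+1) - B m c (j-1)) * (if c j < t then (1:ℝ) else 0)
          ≤ B m c (j+1) - B m c (j-1) := by
      intro j hj
      rw [Finset.mem_Icc] at hj
      have hd : B m c (j-1) ≤ B m c (j+1) := by
        simp only [hB_def]
        rw [if_neg (by omega)]
        by_cases h : j = m
        · rw [if_pos (by omega)]; exact hFp_le1 _
        · rw [if_neg (by omega)]
          exact hFp_mono (hcm (by omega) (by omega))
      constructor
      · apply mul_nonneg (by linarith)
        split_ifs <;> norm_num
      · calc (B m c (j+1) - B m c (j-1)) * (if c j < t then (1:ℝ) else 0)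
            ≤ (B m c (j+1) - B m c (j-1)) * 1 := by
              apply mul_le_mul_of_nonneg_left _ (by linarith)
              split_ifs <;> norm_num
          _ = B m c (j+1) - B m c (j-1) := mul_one _
    have hsum_lb : (0:ℝ) ≤ ∑ j ∈ Finset.Icc 1 m,
        (B m c (j+1) - B m c (j-1)) * (if c j < t then (1:ℝ) else 0) :=
      Finset.sum_nonneg fun j hj => (hterm j hj).1
    have hsum_ub : (∑ j ∈ Finset.Icc 1 m,
        (B m c (j+1) - B m c (j-1)) * (if c j < t then (1:ℝ) else 0)) ≤ 2 := by
      calc (∑ j ∈ Finset.Icc 1 m,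
          (B m c (j+1) - B m c (j-1)) * (if c j < t then (1:ℝ) else 0))
          ≤ ∑ j ∈ Finset.Icc 1 m, (B m c (j+1) - B m c (j-1)) :=
            Finset.sum_le_sum fun j hj => (hterm j hj).2
        _ = B m c (m+1) + B m c m - B m c 1 - B m c 0 := sum_tele _ m
        _ ≤ 2 := by
            have h1 := hBrange (m+1); have h2 := hBrange m
            have h3 := hBrange 1; have h4 := hBrange 0
            linarith [h1.2, h2.2, h3.1, h4.1]
    have hB1 := hBrange 1
    have : f (t, m, c) = (∑ j ∈ Finset.Icc 1 m,
        (B m c (j+1) - B m c (j-1)) * (if c j < t then (1:ℝ) else 0)) + B m c 1 - 1 := rfl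
    rw [this, abs_le]
    constructor <;> linarith [hB1.1, hB1.2]
  -- integrability of f w.r.t. the product law
  have hf_int : Integrable f (τ.prod ν) := by
    apply Integrable.mono' (integrable_const (4:ℝ)) hf_meas.aestronglyMeasurable
    filter_upwards [hprod_ae] with p hp
    rw [Real.norm_eq_abs]
    exact hbound p hp
  -- the law of T on intervals
  have hτ_Ioi : ∀ a : ℝ, 0 ≤ a → (τ (Set.Ioi a)).toReal = 1 - F a := by
    intro a ha
    rw [hτ_def, Measure.map_apply hT measurableSet_Ioi]
    have h1 : T ⁻¹' Set.Ioi a = (T ⁻¹' Set.Iic a)ᶜ := by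
      ext ω; simp [not_le]
    have hcdf' : μ (T ⁻¹' Set.Iic a) = ENNReal.ofReal (F a) := hcdf a
    rw [h1, prob_compl_eq_one_sub (hT measurableSet_Iic), hcdf']
    have h2 : (1:ENNReal) - ENNReal.ofReal (F a) = ENNReal.ofReal (1 - F a) := by
      rw [ENNReal.ofReal_sub 1 (hF_nonneg a ha), ENNReal.ofReal_one]
    rw [h2, ENNReal.toReal_ofReal (by linarith [hF_le1 a])]
  -- inner integral vanishes for good x
  have hinner : ∀ x : ℕ × (ℕ → ℝ), x ∈ S → ∫ t, f (t, x) ∂τ = 0 := by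
    intro x hx
    obtain ⟨m, c⟩ := x
    obtain ⟨hm1, hc0, hcs⟩ := hx
    simp only at hm1 hc0 hcs
    have hcm : ∀ {i j : ℕ}, i ≤ j → j ≤ m → c i ≤ c j := chain_mono hcs
    have hcnn : ∀ j, j ≤ m → 0 ≤ c j := fun j hj => hc0 ▸ hcm (Nat.zero_le j) hj
    have hfx : ∀ t, f (t, m, c) = (∑ j ∈ Finset.Icc 1 m,
        (B m c (j+1) - B m c (j-1)) * (if c j < t then (1:ℝ) else 0)) + (B m c 1 - 1) := by
      intro t
      show g m (t, m, c) = _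
      simp only [hg_def]
      ring
    have hind_int : ∀ j : ℕ, Integrable
        (fun t => (B m c (j+1) - B m c (j-1)) * (if c j < t then (1:ℝ) else 0)) τ := by
      intro j
      apply Integrable.const_mul
      have : (fun t => if c j < t then (1:ℝ) else 0)
          = (Set.Ioi (c j)).indicator (fun _ => (1:ℝ)) := by
        ext t; simp [Set.indicator_apply, Set.mem_Ioi]
      rw [this]
      exact (integrable_const (1:ℝ)).indicator measurableSet_Ioi
    have hind_val : ∀ j, j ∈ Finset.Icc 1 m →
        ∫ t, (B m c (j+1) - B m c (j-1)) * (if c j < t then (1:ℝ) else 0) ∂τ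
          = (B m c (j+1) - B m c (j-1)) * (1 - B m c j) := by
      intro j hj
      rw [Finset.mem_Icc] at hj
      rw [integral_const_mul]
      congr 1
      have h1 : (fun t => if c j < t then (1:ℝ) else 0)
          = (Set.Ioi (c j)).indicator (fun _ => (1:ℝ)) := by
        ext t; simp [Set.indicator_apply, Set.mem_Ioi]
      rw [h1, integral_indicator_const (1:ℝ) measurableSet_Ioi, smul_eq_mul, mul_one, measureReal_def,
        hτ_Ioi (c j) (hcnn j hj.2)]
      have : B m c j = F (c j) := by
        simp only [hB_def]
        rw [if_neg (by omega), hFpF _ (hcnn j hj.2)]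
      rw [this]
    calc ∫ t, f (t, m, c) ∂τ
        = ∫ t, ((∑ j ∈ Finset.Icc 1 m,
            (B m c (j+1) - B m c (j-1)) * (if c j < t then (1:ℝ) else 0))
            + (B m c 1 - 1)) ∂τ := by
          exact integral_congr_ae (ae_of_all _ fun t => hfx t)
      _ = (∫ t, (∑ j ∈ Finset.Icc 1 m,
            (B m c (j+1) - B m c (j-1)) * (if c j < t then (1:ℝ) else 0)) ∂τ)
            + ∫ t, (B m c 1 - 1) ∂τ := by
          apply integral_add (integrable_finset_sum _ fun j _ => hind_int j) (integrable_const _)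
      _ = (∑ j ∈ Finset.Icc 1 m, (B m c (j+1) - B m c (j-1)) * (1 - B m c j))
            + (B m c 1 - 1) := by
          rw [integral_finset_sum _ fun j _ => hind_int j, integral_const]
          simp only [measure_univ, ENNReal.toReal_one, probReal_univ, one_smul]
          congr 1
          exact Finset.sum_congr rfl hind_val
      _ = 0 := by
          have hsum : ∑ j ∈ Finset.Icc 1 m, (B m c (j+1) - B m c (j-1)) * (1 - B m c j)
              = ∑ j ∈ Finset.Icc 1 m,
                ((fun i => (1 - B m c (i-1)) * (1 - B m c i)) j
                  - (fun i => (1 - B m c (i-1)) * (1 - B m c i)) (j+1)) := by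
            apply Finset.sum_congr rfl
            intro j hj
            rw [Finset.mem_Icc] at hj
            simp only [Nat.add_sub_cancel]
            ring
          rw [hsum, sum_tele2]
          have hB0 : B m c 0 = 0 := by
            simp only [hB_def]
            rw [if_neg (by omega), hc0, hFp0]
          have hBm1 : B m c (m+1) = 1 := by
            simp [hB_def]
          simp only [Nat.add_sub_cancel]
          rw [hB0, hBm1]
          norm_num
  -- put it together
  calc ∫ ω, (F (C ω (J ω)) + (if J ω = K ω then 1 else F (C ω (J ω + 1))) - 1) ∂μ
      = ∫ ω, f (T ω, (K ω, C ω)) ∂μ := integral_congr_ae (ae_of_all _ hpt)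
    _ = ∫ p, f p ∂(μ.map (fun ω => (T ω, (K ω, C ω)))) :=
        (integral_map (hT.prodMk hX).aemeasurable hf_meas.aestronglyMeasurable).symm
    _ = ∫ p, f p ∂(τ.prod ν) := by rw [hpair]
    _ = ∫ x, (∫ t, f (t, x) ∂τ) ∂ν := integral_prod_symm f hf_int
    _ = 0 := by
        have hν_ae : ∀ᵐ x ∂ν, x ∈ S := by
          rw [ae_iff]
          exact hν_S
        rw [integral_congr_ae ((hν_ae.mono) fun x hx => hinner x hx)]
        simp
end
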